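/- Let d be a metric on a finite set D of n points, let γ > 1, and let C=(C_1,…,C_k) be an (α,γ)-clustering of D. Let i≠j, let D'⊆C_i and D''⊆C_j, and let x,x'∈D' and y,y'∈D''. Then d(x,y)/d(x',y') ≤ ((γ²+1)/(γ−1)²)². -/
import Mathlib


open Finset

/-- Average distance from `x` to the points of the cluster `C`
(excluding `x` itself if `x ∈ C`; note `dist x x = 0`). -/
noncomputable def avgD {α : Type*} [DecidableEq α] [MetricSpace α]
    (x : α) (C : Finset α) : ℝ :=
  (∑ y ∈ C, dist x y) / (if x ∈ C then ((C.card : ℝ) - 1) else (C.card : ℝ))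

/-- `C` is a `k`-clustering of the finite set `D`: a partition of `D` into `k`
nonempty clusters. -/
def IsClustering {α : Type*} [DecidableEq α] (D : Finset α) {k : ℕ}
    (C : Fin k → Finset α) : Prop :=
  (∀ i, (C i).Nonempty) ∧ (∀ i j, i ≠ j → Disjoint (C i) (C j)) ∧
    Finset.univ.biUnion C = D

/-- `C` is an `(a, γ)`-clustering of `D`: a `k`-clustering whose clusters all
have at least `a·|D|` points, and every point is (on average) at least a factor
`γ` closer to its own cluster than to any other cluster. -/
def IsAGClustering {α : Type*} [DecidableEq α] [MetricSpace α]
    (D : Finset α) (a γ : ℝ) {k : ℕ} (C : Fin k → Finset α) : Prop :=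
  IsClustering D C ∧ (∀ i, a * (D.card : ℝ) ≤ ((C i).card : ℝ)) ∧
    (∀ i j, i ≠ j → ∀ x ∈ C i, γ * avgD x (C i) ≤ avgD x (C j))

lemma avgD_nonneg {α : Type*} [DecidableEq α] [MetricSpace α]
    (x : α) (C : Finset α) : 0 ≤ avgD x C := by
  unfold avgD
  apply div_nonneg (Finset.sum_nonneg fun z _ => dist_nonneg)
  split_ifs with h
  · have : 1 ≤ C.card := Finset.card_pos.mpr ⟨x, h⟩
    have : (1:ℝ) ≤ (C.card:ℝ) := by exact_mod_cast this
    linarith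
  · positivity

lemma sum_dist_le {α : Type*} [DecidableEq α] [MetricSpace α]
    (x : α) (C : Finset α) :
    ∑ z ∈ C, dist x z ≤ (C.card : ℝ) * avgD x C := by
  have hS : 0 ≤ ∑ z ∈ C, dist x z := Finset.sum_nonneg fun z _ => dist_nonneg
  by_cases hx : x ∈ C
  · have h1 : 1 ≤ C.card := Finset.card_pos.mpr ⟨x, hx⟩
    have h1' : (1:ℝ) ≤ (C.card:ℝ) := by exact_mod_cast h1
    unfold avgD
    rw [if_pos hx]
    by_cases hc : (C.card : ℝ) - 1 = 0
    · have hcard : C.card = 1 := by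
        have : (C.card:ℝ) = 1 := by linarith
        exact_mod_cast this
      obtain ⟨a, ha⟩ := Finset.card_eq_one.mp hcard
      have hxa : x = a := by rw [ha] at hx; simpa using hx
      subst hxa
      rw [ha]
      simp
    · have hpos : 0 < (C.card:ℝ) - 1 := lt_of_le_of_ne (by linarith) (Ne.symm hc)
      rw [← mul_div_assoc, le_div_iff₀ hpos]
      nlinarith
  · unfold avgD
    rw [if_neg hx]
    rcases Finset.eq_empty_or_nonempty C with h | h
    · simp [h]
    · have hpos : 0 < (C.card:ℝ) := by exact_mod_cast Finset.card_pos.mpr h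
      rw [mul_div_cancel₀ _ (ne_of_gt hpos)]

lemma avgD_eq_of_not_mem {α : Type*} [DecidableEq α] [MetricSpace α]
    {x : α} {C : Finset α} (hx : x ∉ C) :
    avgD x C = (∑ z ∈ C, dist x z) / (C.card : ℝ) := by
  unfold avgD; rw [if_neg hx]

/-- Triangle inequality for averages, both points in the cluster. -/
lemma dist_le_avgD_add {α : Type*} [DecidableEq α] [MetricSpace α]
    {p q : α} {S : Finset α} (hp : p ∈ S) (hq : q ∈ S) :
    dist p q ≤ avgD p S + avgD q S := by
  have hpos : 0 < (S.card:ℝ) := by exact_mod_cast Finset.card_pos.mpr ⟨p, hp⟩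
  have key : (S.card:ℝ) * dist p q ≤ (S.card:ℝ) * avgD p S + (S.card:ℝ) * avgD q S := by
    have h1 : (S.card:ℝ) * dist p q = ∑ _z ∈ S, dist p q := by
      rw [Finset.sum_const, nsmul_eq_mul]
    have h2 : ∑ _z ∈ S, dist p q ≤ ∑ z ∈ S, (dist p z + dist q z) := by
      apply Finset.sum_le_sum
      intro z _
      calc dist p q ≤ dist p z + dist z q := dist_triangle p z q
        _ = dist p z + dist q z := by rw [dist_comm z q]
    rw [Finset.sum_add_distrib] at h2
    have := sum_dist_le p S
    have := sum_dist_le q S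
    linarith
  nlinarith [avgD_nonneg p S, avgD_nonneg q S]

/-- Triangle inequality for averages: `p` outside the cluster, `q` arbitrary. -/
lemma avgD_le_dist_add_avgD {α : Type*} [DecidableEq α] [MetricSpace α]
    {p : α} {S : Finset α} (hp : p ∉ S) (hS : S.Nonempty) (q : α) :
    avgD p S ≤ dist p q + avgD q S := by
  have hpos : 0 < (S.card:ℝ) := by exact_mod_cast Finset.card_pos.mpr hS
  rw [avgD_eq_of_not_mem hp, div_le_iff₀ hpos]
  have h2 : ∑ z ∈ S, dist p z ≤ ∑ z ∈ S, (dist p q + dist q z) := by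
    apply Finset.sum_le_sum
    intro z _
    exact dist_triangle p q z
  rw [Finset.sum_add_distrib, Finset.sum_const, nsmul_eq_mul] at h2
  have := sum_dist_le q S
  nlinarith [avgD_nonneg q S]

/-- Key lemma: cross-cluster distances sharing an endpoint are comparable. -/
lemma cross_dist_bound {α : Type*} [DecidableEq α] [MetricSpace α]
    {γ : ℝ} (hγ : 1 < γ) {Ci Cj : Finset α}
    (hdisj : Disjoint Ci Cj)
    (hIJ : ∀ w ∈ Ci, γ * avgD w Ci ≤ avgD w Cj)
    (hJI : ∀ w ∈ Cj, γ * avgD w Cj ≤ avgD w Ci)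
    {x x' y : α} (hx : x ∈ Ci) (hx' : x' ∈ Ci) (hy : y ∈ Cj) :
    dist x y * (γ - 1) ^ 2 ≤ (γ ^ 2 + 1) * dist x' y := by
  have hxj : x ∉ Cj := Finset.disjoint_left.mp hdisj hx
  have hx'j : x' ∉ Cj := Finset.disjoint_left.mp hdisj hx'
  have hyi : y ∉ Ci := Finset.disjoint_right.mp hdisj hy
  have hCj : Cj.Nonempty := ⟨y, hy⟩
  have hCi : Ci.Nonempty := ⟨x, hx⟩
  set ax := avgD x Ci with hax_def
  set u := avgD x' Ci with hu_def
  set v := avgD y Cj with hv_def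
  have h1 : γ * ax ≤ avgD x Cj := hIJ x hx
  have h2 : γ * u ≤ avgD x' Cj := hIJ x' hx'
  have h3 : γ * v ≤ avgD y Ci := hJI y hy
  have h4 : avgD x Cj ≤ dist x x' + avgD x' Cj := avgD_le_dist_add_avgD hxj hCj x'
  have h5 : dist x x' ≤ ax + u := dist_le_avgD_add hx hx'
  have h6 : avgD x' Cj ≤ dist x' y + v := by
    have := avgD_le_dist_add_avgD hx'j hCj y
    simpa using this
  have h7 : avgD y Ci ≤ dist x' y + u := by
    have := avgD_le_dist_add_avgD hyi hCi x'
    rw [dist_comm y x'] at this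
    simpa using this
  have hg : (0:ℝ) < γ - 1 := by linarith
  have hγ0 : (0:ℝ) ≤ γ := by linarith
  have ha : γ * u ≤ dist x' y + v := by linarith
  have hb : γ * v ≤ dist x' y + u := by linarith
  have hu : (γ - 1) * u ≤ dist x' y := by
    nlinarith [mul_le_mul_of_nonneg_left ha hγ0, avgD_nonneg x' Ci, avgD_nonneg y Cj]
  have hv : (γ - 1) * v ≤ dist x' y := by
    nlinarith [mul_le_mul_of_nonneg_left hb hγ0, avgD_nonneg x' Ci, avgD_nonneg y Cj]
  have hax : (γ - 1) * ax ≤ u + v + dist x' y := by linarith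
  have hd : dist x y ≤ ax + u + dist x' y := by
    have := dist_triangle x x' y
    linarith
  nlinarith [mul_le_mul_of_nonneg_left hax hg.le, mul_le_mul_of_nonneg_left hu hg.le,
    mul_le_mul_of_nonneg_left hv hg.le, mul_le_mul_of_nonneg_left hd (sq_nonneg (γ-1)),
    dist_nonneg (x := x') (y := y)]

/-- in an `(a, γ)`-clustering with `γ > 1`, for subsets
`D' ⊆ C i`, `D'' ⊆ C j` (`i ≠ j`), `x, x' ∈ D'` and `y, y' ∈ D''`:
`d(x,y)/d(x',y') ≤ ((γ²+1)/(γ−1)²)²`. -/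
theorem ag_clustering_ratio_bound_sq
    {α : Type*} [DecidableEq α] [MetricSpace α]
    (D : Finset α) (a γ : ℝ) (hγ : 1 < γ)
    {k : ℕ} (C : Fin k → Finset α) (hC : IsAGClustering D a γ C)
    (i j : Fin k) (hij : i ≠ j)
    (D' D'' : Finset α) (hD' : D' ⊆ C i) (hD'' : D'' ⊆ C j)
    (x : α) (hx : x ∈ D') (x' : α) (hx' : x' ∈ D')
    (y : α) (hy : y ∈ D'') (y' : α) (hy' : y' ∈ D'') :
    dist x y / dist x' y' ≤ ((γ ^ 2 + 1) / (γ - 1) ^ 2) ^ 2 := by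
  have hxi : x ∈ C i := hD' hx
  have hx'i : x' ∈ C i := hD' hx'
  have hyj : y ∈ C j := hD'' hy
  have hy'j : y' ∈ C j := hD'' hy'
  have hdisj : Disjoint (C i) (C j) := hC.1.2.1 i j hij
  have hIJ : ∀ w ∈ C i, γ * avgD w (C i) ≤ avgD w (C j) := hC.2.2 i j hij
  have hJI : ∀ w ∈ C j, γ * avgD w (C j) ≤ avgD w (C i) := hC.2.2 j i hij.symm
  have L1 : dist x y * (γ - 1) ^ 2 ≤ (γ ^ 2 + 1) * dist x' y :=
    cross_dist_bound hγ hdisj hIJ hJI hxi hx'i hyj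
  have L2 : dist x' y * (γ - 1) ^ 2 ≤ (γ ^ 2 + 1) * dist x' y' := by
    have := cross_dist_bound hγ hdisj.symm hJI hIJ hyj hy'j hx'i
    rw [dist_comm y x', dist_comm y' x'] at this
    exact this
  have hne : x' ≠ y' := fun h => Finset.disjoint_left.mp hdisj hx'i (h ▸ hy'j)
  have hpos : 0 < dist x' y' := dist_pos.mpr hne
  have hg2 : (0:ℝ) < (γ - 1) ^ 2 := pow_pos (by linarith) 2
  rw [div_le_iff₀ hpos, div_pow, div_mul_eq_mul_div, le_div_iff₀ (pow_pos hg2 2)]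
  have hnum : (0:ℝ) ≤ γ ^ 2 + 1 := by positivity
  nlinarith [mul_le_mul_of_nonneg_right L1 hg2.le, mul_le_mul_of_nonneg_left L2 hnum]
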